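/- Let 0 < a < 2 and b > 0, and let Λ be the Beta(a,b) probability measure on [0,1], i.e. the measure with density x ↦ x^{a−1}(1−x)^{b−1}·Γ(a+b)/(Γ(a)Γ(b)) with respect to Lebesgue measure on [0,1]. For each integer N ≥ 2 define λ_N := Σ_{k=2}^{N} binom(N,k) ∫_{[0,1]} x^{k-2}(1-x)^{N-k} dΛ(x). Then lim_{N→∞} N^{2−a}·λ_N^{-1} = (2−a)·Γ(b)/Γ(a+b); equivalently, the coalescence probability c_N = λ_N^{-1} of the associated modified Moran model satisfies c_N ∼ ((2−a)Γ(b)/Γ(a+b))·N^{a−2}. -/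

import Mathlib

/-
With `y = 1 - x`, the binomial theorem gives
`x² ∑_{k ≥ 2} C(N,k) x^(k-2) y^(N-k) = 1 - y^N - N x y^(N-1) = x² ∑_{j < N-1} (j+1) y^j`,
so for a measure without atom at `0`, `λ_N = ∑_{j < N-1} (j+1) ∫ (1-x)^j dΛ`.
For `Λ = Beta(a,b)` these moments are `B(a,b+j)/B(a,b)`, and Euler's limit formula for `Γ`
gives `Γ(j+b)/Γ(j+a+b) ~ j^(-a)`, so the `j`-th term is `~ Γ(a+b)/Γ(b) · j^(1-a)`.
Comparing termwise with the telescoping increments `(j+1)^(2-a) - j^(2-a) ~ (2-a) j^(1-a)`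
(a discrete Stolz–Cesàro argument) yields `λ_N ~ Γ(a+b)/((2-a)Γ(b)) · N^(2-a)`.
-/

open MeasureTheory Filter Topology Asymptotics Finset ProbabilityTheory

lemma one_sub_sq_mul_sum_range_succ_mul_pow {R : Type*} [CommRing R] (y : R) (n : ℕ) :
    (1 - y) ^ 2 * ∑ j ∈ range n, ((j : R) + 1) * y ^ j
      = 1 - (n + 1) * y ^ n + n * y ^ (n + 1) := by
  induction n with
  | zero => simp
  | succ n ih => rw [sum_range_succ, mul_add, ih]; push_cast; ring

lemma sum_Icc_choose_mul_pow_mul_one_sub_pow {K : Type*} [Field K] {x : K} (hx : x ≠ 0) (n : ℕ) :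
    ∑ k ∈ Icc 2 (n + 1), ((n + 1).choose k : K) * (x ^ (k - 2) * (1 - x) ^ (n + 1 - k))
      = ∑ j ∈ range n, ((j : K) + 1) * (1 - x) ^ j := by
  apply mul_left_cancel₀ (pow_ne_zero 2 hx)
  have binomial := add_pow x (1 - x) (n + 1)
  rw [add_sub_cancel, one_pow, range_eq_Ico, ← sum_Ico_consecutive _ (Nat.zero_le 2)
    (by omega : 2 ≤ n + 1 + 1), Ico_add_one_right_eq_Icc, ← range_eq_Ico] at binomial
  have geometric := one_sub_sq_mul_sum_range_succ_mul_pow (1 - x) n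
  rw [sub_sub_cancel] at geometric
  have shift : x ^ 2 * ∑ k ∈ Icc 2 (n + 1),
      ((n + 1).choose k : K) * (x ^ (k - 2) * (1 - x) ^ (n + 1 - k))
      = ∑ k ∈ Icc 2 (n + 1), x ^ k * (1 - x) ^ (n + 1 - k) * ((n + 1).choose k : K) := by
    rw [mul_sum]
    refine sum_congr rfl fun k hk => ?_
    rw [← Nat.sub_add_cancel (mem_Icc.mp hk).1, pow_add]
    simp only [Nat.add_sub_cancel]
    ring
  rw [shift, geometric]
  simp only [sum_range_succ, range_one, sum_singleton, pow_zero, tsub_zero, one_mul,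
    Nat.choose_zero_right, Nat.cast_one, mul_one, pow_one, add_tsub_cancel_right,
    Nat.choose_one_right, Nat.cast_add] at binomial
  linear_combination -binomial

lemma sum_choose_mul_setIntegral_eq_sum_succ_mul_setIntegral {μ : Measure ℝ}
    [IsLocallyFiniteMeasure μ] (h0 : μ {0} = 0) (n : ℕ) :
    ∑ k ∈ Icc 2 (n + 1), ((n + 1).choose k : ℝ) *
        ∫ x in Set.Icc 0 1, x ^ (k - 2) * (1 - x) ^ (n + 1 - k) ∂μ
      = ∑ j ∈ range n, ((j : ℝ) + 1) * ∫ x in Set.Icc 0 1, (1 - x) ^ j ∂μ := by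
  simp_rw [← integral_const_mul]
  rw [← integral_finsetSum _ fun k _ => ?_, ← integral_finsetSum _ fun j _ => ?_]
  · refine integral_congr_ae ?_
    filter_upwards [ae_restrict_of_ae (measure_eq_zero_iff_ae_notMem.mp h0)] with x hx
    exact sum_Icc_choose_mul_pow_mul_one_sub_pow hx n
  all_goals exact Continuous.integrableOn_Icc (by fun_prop)

lemma Asymptotics.IsEquivalent.sum_range {f g : ℕ → ℝ} (h : f ~[atTop] g) (hg : 0 ≤ g)
    (h'g : Tendsto (fun n => ∑ i ∈ range n, g i) atTop atTop) :
    (fun n => ∑ i ∈ range n, f i) ~[atTop] fun n => ∑ i ∈ range n, g i := by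
  simpa only [IsEquivalent, Pi.sub_def, ← sum_sub_distrib] using h.isLittleO.sum_range hg h'g

lemma isEquivalent_natCast_add_one :
    (fun n : ℕ => (n : ℝ) + 1) ~[atTop] fun n => (n : ℝ) :=
  IsEquivalent.refl.add_const_of_norm_tendsto_atTop
    (tendsto_norm_atTop_atTop.comp tendsto_natCast_atTop_atTop)

lemma isEquivalent_add_one_rpow_sub_rpow {s : ℝ} (hs : s ≠ 0) :
    (fun n : ℕ => ((n : ℝ) + 1) ^ s - (n : ℝ) ^ s) ~[atTop] fun n => s * (n : ℝ) ^ (s - 1) := by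
  have slope : Tendsto (fun t : ℝ => t⁻¹ * ((1 + t) ^ s - 1)) (𝓝[≠] 0) (𝓝 s) := by
    simpa using
      (Real.hasDerivAt_rpow_const (x := 1) (p := s) (Or.inl one_ne_zero)).tendsto_slope_zero
  have inv_nat : Tendsto (fun n : ℕ => ((n : ℝ))⁻¹) atTop (𝓝[≠] 0) :=
    (tendsto_inv_atTop_nhdsGT_zero.comp tendsto_natCast_atTop_atTop).mono_right
      (nhdsWithin_mono _ fun _ h => ne_of_gt h)
  refine isEquivalent_iff_exists_eq_mul.mpr
    ⟨fun n : ℕ => (n : ℝ) * ((1 + (n : ℝ)⁻¹) ^ s - 1) / s, ?_, ?_⟩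
  · simpa [hs] using ((slope.comp inv_nat).div_const s)
  · filter_upwards [eventually_gt_atTop 0] with n hn
    have hn' : (0 : ℝ) < n := by exact_mod_cast hn
    have : (n : ℝ) + 1 = n * (1 + (n : ℝ)⁻¹) := by field_simp
    simp only [Pi.mul_apply]
    rw [this, Real.mul_rpow hn'.le (by positivity), Real.rpow_sub_one hn'.ne']
    field_simp

lemma isEquivalent_sum_range_of_isEquivalent_rpow {v : ℕ → ℝ} {c s : ℝ} (hc : 0 < c) (hs : 0 < s)
    (hv : v ~[atTop] fun n => c * (n : ℝ) ^ (s - 1)) :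
    (fun n => ∑ i ∈ range n, v i) ~[atTop] fun n => c / s * (n : ℝ) ^ s := by
  set g : ℕ → ℝ := fun n => c / s * (((n : ℝ) + 1) ^ s - (n : ℝ) ^ s)
  have hvg : v ~[atTop] g := by
    refine hv.trans (IsEquivalent.symm ?_)
    refine ((IsEquivalent.refl (u := fun _ : ℕ => c / s)).mul
      (isEquivalent_add_one_rpow_sub_rpow hs.ne')).congr_right (Eventually.of_forall fun n => ?_)
    simp only [Pi.mul_apply]
    field_simp
  have hg : 0 ≤ g := fun n => mul_nonneg (div_pos hc hs).le
    (sub_nonneg.mpr (Real.rpow_le_rpow n.cast_nonneg (by linarith) hs.le))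
  have hsum : ∀ n, ∑ i ∈ range n, g i = c / s * (n : ℝ) ^ s := fun n => by
    have := sum_range_sub (fun i : ℕ => (i : ℝ) ^ s) n
    push_cast at this
    rw [← mul_sum, this, Real.zero_rpow hs.ne', sub_zero]
  have htop : Tendsto (fun n : ℕ => c / s * (n : ℝ) ^ s) atTop atTop :=
    ((tendsto_rpow_atTop hs).comp tendsto_natCast_atTop_atTop).const_mul_atTop (div_pos hc hs)
  simp only [← hsum] at htop ⊢
  exact hvg.sum_range hg htop

lemma tendsto_rpow_mul_inv_of_isEquivalent_succ {f : ℕ → ℝ} {c s : ℝ} (hc : c ≠ 0)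
    (hf : (fun n => f (n + 1)) ~[atTop] fun n => c * (n : ℝ) ^ s) :
    Tendsto (fun N : ℕ => (N : ℝ) ^ s * (f N)⁻¹) atTop (𝓝 c⁻¹) := by
  rw [← tendsto_add_atTop_iff_nat 1]
  have hsucc : (fun n : ℕ => ((n + 1 : ℕ) : ℝ) ^ s) ~[atTop] fun n => (n : ℝ) ^ s := by
    push_cast
    exact isEquivalent_natCast_add_one.rpow fun n => n.cast_nonneg
  refine (hsucc.mul hf.inv).symm.tendsto_nhds (tendsto_const_nhds.congr' ?_)
  filter_upwards [eventually_gt_atTop 0] with n hn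
  have : (n : ℝ) ^ s ≠ 0 := (Real.rpow_pos_of_pos (by exact_mod_cast hn) s).ne'
  simp only [Pi.mul_apply, Pi.inv_apply]
  field_simp

lemma Real.Gamma_add_nat_eq_Gamma_mul_prod {s : ℝ} (hs : 0 < s) (n : ℕ) :
    Gamma (s + n) = Gamma s * ∏ j ∈ range n, (s + j) := by
  induction n with
  | zero => simp
  | succ n ih =>
    rw [prod_range_succ, ← mul_assoc, ← ih, Nat.cast_succ, ← add_assoc,
      Gamma_add_one (by positivity), mul_comm]

lemma Real.isEquivalent_Gamma_nat_add {s : ℝ} (hs : 0 < s) :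
    (fun n : ℕ => Gamma (n + s)) ~[atTop] fun n => (n : ℝ) ^ s * Gamma n := by
  refine isEquivalent_of_tendsto_one ?_
  have hΓ : Gamma s ≠ 0 := (Gamma_pos_of_pos hs).ne'
  have h := ((tendsto_const_nhds (x := Gamma s)).div (GammaSeq_tendsto_Gamma s) hΓ).mul
    (tendsto_natCast_div_add_atTop s)
  rw [div_self hΓ, one_mul] at h
  refine h.congr' ?_
  filter_upwards [eventually_gt_atTop 0] with n hn
  have hn' : (0 : ℝ) < n := by exact_mod_cast hn
  have hprod := Gamma_add_nat_eq_Gamma_mul_prod hs (n + 1)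
  rw [Nat.cast_succ, ← add_assoc, Gamma_add_one (by positivity)] at hprod
  have hfact : (n.factorial : ℝ) = n * Gamma n := by
    rw [← Gamma_nat_eq_factorial, Gamma_add_one hn'.ne']
  simp only [Pi.div_apply, GammaSeq]
  rw [div_div_eq_mul_div, ← hprod, hfact, add_comm s]
  field_simp

lemma Real.isEquivalent_Gamma_nat_add_div_Gamma_nat_add {x y : ℝ} (hx : 0 < x) (hy : 0 < y) :
    (fun n : ℕ => Gamma (n + x) / Gamma (n + y)) ~[atTop] fun n => (n : ℝ) ^ (x - y) := by
  refine ((isEquivalent_Gamma_nat_add hx).div (isEquivalent_Gamma_nat_add hy)).congr_right ?_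
  filter_upwards [eventually_gt_atTop 0] with n hn
  have hn' : (0 : ℝ) < n := by exact_mod_cast hn
  have : Gamma n ≠ 0 := (Gamma_pos_of_pos hn').ne'
  simp only [Pi.div_apply]
  rw [Real.rpow_sub hn']
  field_simp

namespace ProbabilityTheory

variable {a b : ℝ}

lemma betaPDFReal_nonneg (ha : 0 < a) (hb : 0 < b) (x : ℝ) : 0 ≤ betaPDFReal a b x := by
  by_cases hx : 0 < x ∧ x < 1
  · exact (betaPDFReal_pos hx.1 hx.2 ha hb).le
  · simp [betaPDFReal, hx]

lemma setIntegral_betaMeasure (ha : 0 < a) (hb : 0 < b) {s : Set ℝ} (hs : MeasurableSet s)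
    (f : ℝ → ℝ) : ∫ x in s, f x ∂betaMeasure a b = ∫ x in s, betaPDFReal a b x * f x := by
  rw [betaMeasure, setIntegral_withDensity_eq_setIntegral_toReal_smul (f := betaPDF a b)
    (measurable_betaPDFReal a b).ennreal_ofReal
    (Eventually.of_forall fun _ => ENNReal.ofReal_lt_top) _ hs]
  simp only [betaPDF, ENNReal.toReal_ofReal (betaPDFReal_nonneg ha hb _), smul_eq_mul]

lemma integral_betaPDFReal (ha : 0 < a) (hb : 0 < b) : ∫ x, betaPDFReal a b x = 1 := by
  have := isProbabilityMeasureBeta ha hb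
  simpa using (setIntegral_betaMeasure ha hb MeasurableSet.univ (fun _ => (1 : ℝ))).symm

lemma betaPDFReal_mul_one_sub_pow (ha : 0 < a) (hb : 0 < b) (j : ℕ) (x : ℝ) :
    betaPDFReal a b x * (1 - x) ^ j = beta a (b + j) / beta a b * betaPDFReal a (b + j) x := by
  by_cases hx : 0 < x ∧ x < 1
  · have h1x : 0 < 1 - x := sub_pos.mpr hx.2
    have hB : beta a (b + j) ≠ 0 := (beta_pos ha (by positivity)).ne'
    simp only [betaPDFReal, if_pos hx]
    rw [show b + j - 1 = (b - 1) + j by ring, Real.rpow_add h1x, Real.rpow_natCast]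
    field_simp
  · simp [betaPDFReal, hx]

lemma setIntegral_Icc_one_sub_pow_betaMeasure (ha : 0 < a) (hb : 0 < b) (j : ℕ) :
    ∫ x in Set.Icc 0 1, (1 - x) ^ j ∂betaMeasure a b = beta a (b + j) / beta a b := by
  have hsupp : ∀ x ∉ Set.Icc (0 : ℝ) 1, betaPDFReal a (b + j) x = 0 := fun x hx => by
    have : ¬(0 < x ∧ x < 1) := fun h => hx ⟨h.1.le, h.2.le⟩
    simp [betaPDFReal, this]
  simp_rw [setIntegral_betaMeasure ha hb measurableSet_Icc, betaPDFReal_mul_one_sub_pow ha hb,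
    integral_const_mul, setIntegral_eq_integral_of_forall_compl_eq_zero hsupp,
    integral_betaPDFReal ha (by positivity : 0 < b + j), mul_one]

lemma withDensity_restrict_Icc_eq_betaMeasure (a b : ℝ) :
    (volume.restrict (Set.Icc (0 : ℝ) 1)).withDensity (fun x => ENNReal.ofReal
      (x ^ (a - 1) * (1 - x) ^ (b - 1) * Real.Gamma (a + b) / (Real.Gamma a * Real.Gamma b)))
      = betaMeasure a b := by
  rw [betaMeasure, ← withDensity_indicator measurableSet_Icc]
  refine withDensity_congr_ae ?_
  filter_upwards [(Ioo_ae_eq_Icc (a := (0 : ℝ)) (b := 1) (μ := volume)).mem_iff] with x hx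
  by_cases hIoo : x ∈ Set.Ioo 0 1
  · rw [Set.indicator_of_mem (Set.Ioo_subset_Icc_self hIoo), betaPDF_of_pos_lt_one hIoo.1 hIoo.2,
      beta, one_div_div]
    congr 1
    ring
  · rw [Set.indicator_of_notMem (hx.not.mp hIoo), betaPDF_eq,
      if_neg (show ¬(0 < x ∧ x < 1) from hIoo), ENNReal.ofReal_zero]

lemma isEquivalent_beta_add_nat (ha : 0 < a) (hb : 0 < b) :
    (fun n : ℕ => beta a (b + n)) ~[atTop] fun n => Real.Gamma a * (n : ℝ) ^ (-a) := by
  have h := (IsEquivalent.refl (u := fun _ : ℕ => Real.Gamma a)).mul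
    (Real.isEquivalent_Gamma_nat_add_div_Gamma_nat_add hb (add_pos ha hb))
  refine (h.congr_left (Eventually.of_forall fun n => ?_)).congr_right
    (Eventually.of_forall fun n => ?_)
  · simp only [Pi.mul_apply, beta]
    rw [add_comm b, add_left_comm a, mul_div_assoc]
  · simp only [Pi.mul_apply, sub_add_cancel_right]

lemma isEquivalent_succ_mul_beta_add_nat_div_beta (ha : 0 < a) (hb : 0 < b) :
    (fun j : ℕ => ((j : ℝ) + 1) * (beta a (b + j) / beta a b))
      ~[atTop] fun j => Real.Gamma (a + b) / Real.Gamma b * (j : ℝ) ^ (1 - a) := by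
  refine (isEquivalent_natCast_add_one.mul
    ((isEquivalent_beta_add_nat ha hb).div IsEquivalent.refl)).congr_right ?_
  filter_upwards [eventually_gt_atTop 0] with j hj
  have hj' : (0 : ℝ) < j := by exact_mod_cast hj
  have hΓa := (Real.Gamma_pos_of_pos ha).ne'
  have hΓb := (Real.Gamma_pos_of_pos hb).ne'
  have hΓab := (Real.Gamma_pos_of_pos (add_pos ha hb)).ne'
  simp only [Pi.mul_apply, Pi.div_apply, beta]
  rw [sub_eq_add_neg, Real.rpow_add hj', Real.rpow_one]
  field_simp

end ProbabilityTheory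

/-- For the Beta(a,b) measure Λ on [0,1] with 0 < a < 2, b > 0, and
λ_N := Σ_{k=2}^N binom(N,k) ∫ x^(k-2)(1-x)^(N-k) dΛ(x), one has
N^(2−a)·λ_N⁻¹ → (2−a)·Γ(b)/Γ(a+b), i.e. c_N = λ_N⁻¹ ∼ ((2−a)Γ(b)/Γ(a+b))·N^(a−2). -/
theorem beta_coalescent_coalescence_probability_asymptotics
    (a b : ℝ) (ha : 0 < a) (ha2 : a < 2) (hb : 0 < b)
    (Λ : Measure ℝ)
    (hΛ : Λ = (volume.restrict (Set.Icc (0:ℝ) 1)).withDensity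
      (fun x => ENNReal.ofReal
        (x ^ (a - 1) * (1 - x) ^ (b - 1) * Real.Gamma (a + b) /
          (Real.Gamma a * Real.Gamma b))))
    (lam : ℕ → ℝ)
    (hlam : ∀ N : ℕ, lam N = ∑ k ∈ Finset.Icc 2 N, (N.choose k : ℝ) *
      ∫ x in Set.Icc (0:ℝ) 1, x ^ (k - 2) * (1 - x) ^ (N - k) ∂Λ) :
    Tendsto (fun N : ℕ => (N : ℝ) ^ ((2:ℝ) - a) * (lam N)⁻¹) atTop
      (𝓝 ((2 - a) * Real.Gamma b / Real.Gamma (a + b))) := by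
  rw [withDensity_restrict_Icc_eq_betaMeasure] at hΛ
  have := isProbabilityMeasureBeta ha hb
  have hatom : betaMeasure a b {0} = 0 :=
    withDensity_absolutelyContinuous _ _ Real.volume_singleton
  have hlam_succ (n : ℕ) :
      lam (n + 1) = ∑ j ∈ range n, ((j : ℝ) + 1) * (beta a (b + j) / beta a b) := by
    rw [hlam, hΛ, sum_choose_mul_setIntegral_eq_sum_succ_mul_setIntegral hatom]
    simp_rw [setIntegral_Icc_one_sub_pow_betaMeasure ha hb]
  have hC : 0 < Real.Gamma (a + b) / Real.Gamma b :=
    div_pos (Real.Gamma_pos_of_pos (add_pos ha hb)) (Real.Gamma_pos_of_pos hb)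
  have hs : 0 < 2 - a := sub_pos.mpr ha2
  have hterm := isEquivalent_succ_mul_beta_add_nat_div_beta ha hb
  rw [show 1 - a = 2 - a - 1 by ring] at hterm
  have hlam_equiv : (fun n => lam (n + 1)) ~[atTop]
      fun n => Real.Gamma (a + b) / Real.Gamma b / (2 - a) * (n : ℝ) ^ (2 - a) := by
    simp_rw [hlam_succ]
    exact isEquivalent_sum_range_of_isEquivalent_rpow hC hs hterm
  convert tendsto_rpow_mul_inv_of_isEquivalent_succ (div_pos hC hs).ne' hlam_equiv using 2
  rw [inv_div, div_div_eq_mul_div]
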